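/- arXiv:2209.03565 — 5 statements merged into one kernel-verified Lean document; each statement's English description precedes it below -/
import Mathlib

section
/- Let E be a real symmetric positive definite n×n matrix and α > 0. Let c₁, c₂, c₃ ∈ ℝⁿ be nonzero, linearly independent vectors with c₃ orthogonal to both c₁ and c₂. Define Q = (1/2)(c₁c₂ᵀ + c₂c₁ᵀ) + c₃c₃ᵀ, φ(x) = xᵀQx, and γ = λmax(E^{-1/2}(2Q − c₃c₃ᵀ)E^{-1/2}). Then for every x ∈ ℝⁿ with xᵀEx ≤ α², one has φ(x)² ≤ α² (c₁ᵀE⁻¹c₁)(c₂ᵀx)² + α² γ (c₃ᵀx)², and likewise φ(x)² ≤ α² (c₂ᵀE⁻¹c₂)(c₁ᵀx)² + α² γ (c₃ᵀx)² (the Rank-3 Valley quadratic constraints). -/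
/-!
Write `aᵢ = cᵢᵀx`, so that `φ(x) = a₁a₂ + a₃²` and `xᵀ(2Q − c₃c₃ᵀ)x = 2a₁a₂ + a₃²`. Then
`φ(x)² = a₁²a₂² + a₃²(2a₁a₂ + a₃²)`. Cauchy–Schwarz in the inner product given by `E` bounds
`a₁² ≤ (c₁ᵀE⁻¹c₁)(xᵀEx)`, and after the substitution `y = E^{1/2}x` the Rayleigh quotient bounds
`2a₁a₂ + a₃² ≤ γ(xᵀEx)`. Evaluating the latter at `x = c₃`, where the orthogonality gives
`(c₃ᵀc₃)² ≤ γ(c₃ᵀEc₃)`, shows `γ > 0`, so `xᵀEx ≤ α²` may be inserted in both bounds.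
-/

open Matrix

namespace Matrix

variable {m : Type*} [Fintype m]

theorem dotProduct_vecMulVec_mulVec {α : Type*} [CommSemiring α] (u v x : m → α) :
    x ⬝ᵥ vecMulVec u v *ᵥ x = (u ⬝ᵥ x) * (v ⬝ᵥ x) := by
  rw [vecMulVec_mulVec, op_smul_eq_smul, dotProduct_smul, smul_eq_mul, mul_comm,
    dotProduct_comm x u]

theorem PosSemidef.sq_dotProduct_mulVec_le {E : Matrix m m ℝ} (hE : E.PosSemidef) (u v : m → ℝ) :
    (u ⬝ᵥ E *ᵥ v) ^ 2 ≤ (u ⬝ᵥ E *ᵥ u) * (v ⬝ᵥ E *ᵥ v) := by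
  let := E.toSeminormedAddCommGroup hE
  let := E.toInnerProductSpace hE
  have h := real_inner_mul_inner_self_le u v
  change ((E *ᵥ v) ⬝ᵥ star u) * ((E *ᵥ v) ⬝ᵥ star u)
    ≤ ((E *ᵥ u) ⬝ᵥ star u) * ((E *ᵥ v) ⬝ᵥ star v) at h
  simpa only [star_trivial, dotProduct_comm _ u, dotProduct_comm _ v, sq] using h

variable [DecidableEq m]

theorem PosDef.sq_dotProduct_le {E : Matrix m m ℝ} (hE : E.PosDef) (c x : m → ℝ) :
    (c ⬝ᵥ x) ^ 2 ≤ (c ⬝ᵥ E⁻¹ *ᵥ c) * (x ⬝ᵥ E *ᵥ x) := by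
  have hEc : E *ᵥ (E⁻¹ *ᵥ c) = c := by
    rw [mulVec_mulVec, mul_nonsing_inv E ((isUnit_iff_isUnit_det E).mp hE.isUnit), one_mulVec]
  have hsymm : Eᵀ = E := hE.isHermitian.eq
  have hcx : E⁻¹ *ᵥ c ⬝ᵥ E *ᵥ x = c ⬝ᵥ x := by
    rw [dotProduct_mulVec, ← mulVec_transpose, hsymm, hEc]
  have hcc : E⁻¹ *ᵥ c ⬝ᵥ E *ᵥ (E⁻¹ *ᵥ c) = c ⬝ᵥ E⁻¹ *ᵥ c := by
    rw [hEc, dotProduct_comm]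
  simpa only [hcx, hcc] using hE.posSemidef.sq_dotProduct_mulVec_le (E⁻¹ *ᵥ c) x

open scoped MatrixOrder in
theorem IsHermitian.dotProduct_mulVec_le_iSup_eigenvalues {A : Matrix m m ℝ} (hA : A.IsHermitian)
    (x : m → ℝ) : x ⬝ᵥ A *ᵥ x ≤ (⨆ i, hA.eigenvalues i) * (x ⬝ᵥ x) := by
  have hle : A ≤ algebraMap ℝ _ (⨆ i, hA.eigenvalues i) := by
    refine le_algebraMap_of_spectrum_le fun r hr => ?_
    obtain ⟨i, rfl⟩ := hA.spectrum_real_eq_range_eigenvalues ▸ hr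
    exact le_ciSup (Set.finite_range _).bddAbove i
  simpa only [star_trivial, Algebra.algebraMap_eq_smul_one, sub_mulVec, smul_mulVec, one_mulVec,
    dotProduct_sub, dotProduct_smul, smul_eq_mul, sub_nonneg] using
    (Matrix.le_iff.mp hle).dotProduct_mulVec_nonneg x

theorem IsHermitian.dotProduct_mulVec_le_iSup_eigenvalues_inv_conj {N S : Matrix m m ℝ}
    (hS : S.IsHermitian) (hSdet : IsUnit S.det) (hM : (S⁻¹ * N * S⁻¹).IsHermitian) (z : m → ℝ) :
    z ⬝ᵥ N *ᵥ z ≤ (⨆ i, hM.eigenvalues i) * (z ⬝ᵥ (S * S) *ᵥ z) := by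
  have hconj : S * (S⁻¹ * N * S⁻¹) * S = N := by
    rw [← Matrix.mul_assoc, ← Matrix.mul_assoc, mul_nonsing_inv S hSdet, Matrix.one_mul,
      Matrix.mul_assoc, nonsing_inv_mul S hSdet, Matrix.mul_one]
  have hquad : ∀ B : Matrix m m ℝ, S *ᵥ z ⬝ᵥ B *ᵥ (S *ᵥ z) = z ⬝ᵥ (S * B * S) *ᵥ z := by
    intro B
    have hSt : Sᵀ = S := hS.eq
    rw [← mulVec_mulVec, ← mulVec_mulVec, dotProduct_mulVec z, ← mulVec_transpose, hSt]
  have hnorm : S *ᵥ z ⬝ᵥ S *ᵥ z = z ⬝ᵥ (S * S) *ᵥ z := by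
    simpa only [one_mulVec, Matrix.mul_one] using hquad 1
  have h := hM.dotProduct_mulVec_le_iSup_eigenvalues (S *ᵥ z)
  rwa [hquad, hconj, hnorm] at h

theorem IsHermitian.cfc_eq_eigenvectorUnitary_mul {A : Matrix m m ℝ} (hA : A.IsHermitian)
    (f : ℝ → ℝ) :
    cfc f A = (hA.eigenvectorUnitary : Matrix m m ℝ) * diagonal (fun i => f (hA.eigenvalues i)) *
      (star hA.eigenvectorUnitary : Matrix m m ℝ) := by
  rw [hA.cfc_eq, IsHermitian.cfc, Unitary.conjStarAlgAut_apply]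
  rfl

theorem PosSemidef.cfc_sqrt_mul_self {E : Matrix m m ℝ} (hE : E.PosSemidef) :
    cfc Real.sqrt E * cfc Real.sqrt E = E := by
  have : IsSelfAdjoint E := hE.isHermitian
  rw [← cfc_mul Real.sqrt Real.sqrt E]
  conv_rhs => rw [← cfc_id' ℝ E]
  refine cfc_congr fun x hx => ?_
  obtain ⟨i, rfl⟩ := hE.isHermitian.spectrum_real_eq_range_eigenvalues ▸ hx
  exact Real.mul_self_sqrt (hE.eigenvalues_nonneg i)

theorem PosDef.dotProduct_mulVec_le_iSup_eigenvalues_sqrt_inv_conj {E N S : Matrix m m ℝ}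
    (hE : E.PosDef) (hS : cfc Real.sqrt E = S) (hM : (S⁻¹ * N * S⁻¹).IsHermitian) (z : m → ℝ) :
    z ⬝ᵥ N *ᵥ z ≤ (⨆ i, hM.eigenvalues i) * (z ⬝ᵥ E *ᵥ z) := by
  have hSE : S * S = E := hS ▸ hE.posSemidef.cfc_sqrt_mul_self
  have hSdet : IsUnit S.det :=
    isUnit_of_mul_isUnit_left (by rw [← det_mul, hSE]; exact isUnit_iff_ne_zero.mpr hE.det_pos.ne')
  have h := IsHermitian.dotProduct_mulVec_le_iSup_eigenvalues_inv_conj (hS ▸ cfc_predicate _ E)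
    hSdet hM z
  rwa [hSE] at h

end Matrix

theorem sq_mul_add_sq_le {a₁ a₂ a₃ k γ r : ℝ} (h₁ : a₁ ^ 2 ≤ k * r)
    (h₂ : 2 * (a₁ * a₂) + a₃ ^ 2 ≤ γ * r) :
    (a₁ * a₂ + a₃ ^ 2) ^ 2 ≤ r * k * a₂ ^ 2 + r * γ * a₃ ^ 2 := by
  nlinarith [mul_le_mul_of_nonneg_right h₁ (sq_nonneg a₂),
    mul_le_mul_of_nonneg_left h₂ (sq_nonneg a₃)]

theorem rank3_valley_QC_general {n : ℕ} (E : Matrix (Fin n) (Fin n) ℝ) (hE : E.PosDef)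
    (α : ℝ) (c₁ c₂ c₃ : Fin n → ℝ)
    (h3 : c₃ ≠ 0)
    (ho1 : c₃ ⬝ᵥ c₁ = 0) (ho2 : c₃ ⬝ᵥ c₂ = 0)
    (Q : Matrix (Fin n) (Fin n) ℝ)
    (hQdef : Q = (1 / 2 : ℝ) • (vecMulVec c₁ c₂ + vecMulVec c₂ c₁) + vecMulVec c₃ c₃)
    (hM : (((hE.posSemidef.1.eigenvectorUnitary : Matrix (Fin n) (Fin n) ℝ) *
        diagonal (fun i => Real.sqrt (hE.posSemidef.1.eigenvalues i)) *
        (star hE.posSemidef.1.eigenvectorUnitary : Matrix (Fin n) (Fin n) ℝ))⁻¹ * ((2 : ℝ) • Q - vecMulVec c₃ c₃) *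
        ((hE.posSemidef.1.eigenvectorUnitary : Matrix (Fin n) (Fin n) ℝ) *
        diagonal (fun i => Real.sqrt (hE.posSemidef.1.eigenvalues i)) *
        (star hE.posSemidef.1.eigenvectorUnitary : Matrix (Fin n) (Fin n) ℝ))⁻¹).IsHermitian)
    (γ : ℝ) (hγ : γ = ⨆ i, hM.eigenvalues i)
    (x : Fin n → ℝ) (hx : x ⬝ᵥ E.mulVec x ≤ α ^ 2) :
    (x ⬝ᵥ Q.mulVec x) ^ 2
        ≤ α ^ 2 * (c₁ ⬝ᵥ E⁻¹.mulVec c₁) * (c₂ ⬝ᵥ x) ^ 2 + α ^ 2 * γ * (c₃ ⬝ᵥ x) ^ 2 ∧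
    (x ⬝ᵥ Q.mulVec x) ^ 2
        ≤ α ^ 2 * (c₂ ⬝ᵥ E⁻¹.mulVec c₂) * (c₁ ⬝ᵥ x) ^ 2 + α ^ 2 * γ * (c₃ ⬝ᵥ x) ^ 2 := by
  have hQ : ∀ z, z ⬝ᵥ Q *ᵥ z = (c₁ ⬝ᵥ z) * (c₂ ⬝ᵥ z) + (c₃ ⬝ᵥ z) ^ 2 := by
    intro z
    simp only [hQdef, add_mulVec, smul_mulVec, dotProduct_add, dotProduct_smul, smul_eq_mul,
      dotProduct_vecMulVec_mulVec]
    ring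
  have hRayleigh : ∀ z, 2 * ((c₁ ⬝ᵥ z) * (c₂ ⬝ᵥ z)) + (c₃ ⬝ᵥ z) ^ 2 ≤ γ * (z ⬝ᵥ E *ᵥ z) := by
    intro z
    have h := hE.dotProduct_mulVec_le_iSup_eigenvalues_sqrt_inv_conj
      (hE.posSemidef.isHermitian.cfc_eq_eigenvectorUnitary_mul Real.sqrt) hM z
    simp only [sub_mulVec, smul_mulVec, dotProduct_sub, dotProduct_smul, smul_eq_mul, hQ,
      dotProduct_vecMulVec_mulVec, ← hγ] at h
    linarith
  have hγ0 : 0 ≤ γ := by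
    have h := hRayleigh c₃
    rw [dotProduct_comm c₁, dotProduct_comm c₂, ho1, ho2, zero_mul, mul_zero, zero_add] at h
    have hc₃ := dotProduct_self_eq_zero.not.mpr h3
    have hEc₃ : 0 ≤ c₃ ⬝ᵥ E *ᵥ c₃ := by
      simpa only [star_trivial] using hE.posSemidef.dotProduct_mulVec_nonneg c₃
    exact (pos_of_mul_pos_left (lt_of_lt_of_le (by positivity) h) hEc₃).le
  have hbound : 2 * ((c₁ ⬝ᵥ x) * (c₂ ⬝ᵥ x)) + (c₃ ⬝ᵥ x) ^ 2 ≤ γ * α ^ 2 :=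
    (hRayleigh x).trans (mul_le_mul_of_nonneg_left hx hγ0)
  have hCS : ∀ c, (c ⬝ᵥ x) ^ 2 ≤ (c ⬝ᵥ E⁻¹ *ᵥ c) * α ^ 2 := fun c =>
    (hE.sq_dotProduct_le c x).trans (mul_le_mul_of_nonneg_left hx
      (by simpa only [star_trivial] using hE.inv.posSemidef.dotProduct_mulVec_nonneg c))
  rw [hQ]
  refine ⟨sq_mul_add_sq_le (hCS c₁) hbound, ?_⟩
  rw [mul_comm (c₁ ⬝ᵥ x)] at hbound ⊢
  exact sq_mul_add_sq_le (hCS c₂) hbound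

/-- Rank-3 Valley quadratic constraints (Theorem 3): let `c₁, c₂, c₃` be
nonzero, linearly independent vectors with `c₃` orthogonal to `c₁` and `c₂`,
let `Q = (1/2)(c₁c₂ᵀ + c₂c₁ᵀ) + c₃c₃ᵀ`, `φ(x) = xᵀQx`, and
`γ = λmax(E^{-1/2}(2Q − c₃c₃ᵀ)E^{-1/2})`.  Then every `x` in the ellipsoid
`{x : xᵀEx ≤ α²}` satisfies `φ(x)² ≤ α²(c₁ᵀE⁻¹c₁)(c₂ᵀx)² + α²γ(c₃ᵀx)²`
and `φ(x)² ≤ α²(c₂ᵀE⁻¹c₂)(c₁ᵀx)² + α²γ(c₃ᵀx)²`. -/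
theorem rank3_valley_QC {n : ℕ} (E : Matrix (Fin n) (Fin n) ℝ) (hE : E.PosDef)
    (α : ℝ) (hα : 0 < α) (c₁ c₂ c₃ : Fin n → ℝ)
    (h1 : c₁ ≠ 0) (h2 : c₂ ≠ 0) (h3 : c₃ ≠ 0)
    (hli : LinearIndependent ℝ ![c₁, c₂, c₃])
    (ho1 : c₃ ⬝ᵥ c₁ = 0) (ho2 : c₃ ⬝ᵥ c₂ = 0)
    (Q : Matrix (Fin n) (Fin n) ℝ)
    (hQdef : Q = (1 / 2 : ℝ) • (vecMulVec c₁ c₂ + vecMulVec c₂ c₁) + vecMulVec c₃ c₃)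
    (hM : (((hE.posSemidef.1.eigenvectorUnitary : Matrix (Fin n) (Fin n) ℝ) *
        diagonal (fun i => Real.sqrt (hE.posSemidef.1.eigenvalues i)) *
        (star hE.posSemidef.1.eigenvectorUnitary : Matrix (Fin n) (Fin n) ℝ))⁻¹ * ((2 : ℝ) • Q - vecMulVec c₃ c₃) *
        ((hE.posSemidef.1.eigenvectorUnitary : Matrix (Fin n) (Fin n) ℝ) *
        diagonal (fun i => Real.sqrt (hE.posSemidef.1.eigenvalues i)) *
        (star hE.posSemidef.1.eigenvectorUnitary : Matrix (Fin n) (Fin n) ℝ))⁻¹).IsHermitian)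
    (γ : ℝ) (hγ : γ = ⨆ i, hM.eigenvalues i)
    (x : Fin n → ℝ) (hx : x ⬝ᵥ E.mulVec x ≤ α ^ 2) :
    (x ⬝ᵥ Q.mulVec x) ^ 2
        ≤ α ^ 2 * (c₁ ⬝ᵥ E⁻¹.mulVec c₁) * (c₂ ⬝ᵥ x) ^ 2 + α ^ 2 * γ * (c₃ ⬝ᵥ x) ^ 2 ∧
    (x ⬝ᵥ Q.mulVec x) ^ 2
        ≤ α ^ 2 * (c₂ ⬝ᵥ E⁻¹.mulVec c₂) * (c₁ ⬝ᵥ x) ^ 2 + α ^ 2 * γ * (c₃ ⬝ᵥ x) ^ 2 :=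
  rank3_valley_QC_general E hE α c₁ c₂ c₃ h3 ho1 ho2 Q hQdef hM γ hγ x hx
end

section
/- Let Q be a real symmetric n×n matrix of rank 3 having exactly two positive eigenvalues and exactly one negative eigenvalue (counting multiplicity). Then there exist nonzero, linearly independent vectors c₁, c₂, c₃ ∈ ℝⁿ with c₃ orthogonal to both c₁ and c₂ such that Q = (1/2)(c₁c₂ᵀ + c₂c₁ᵀ) + c₃c₃ᵀ. Explicitly, if (λ₁, v₁), (λ₂, v₂), (λ₃, v₃) are orthonormal eigenpairs of Q with λ₁, λ₂ > 0 and λ₃ < 0, then c₁ = √λ₁ v₁ + √|λ₃| v₃, c₂ = √λ₁ v₁ − √|λ₃| v₃, and c₃ = √λ₂ v₂ satisfy this decomposition. -/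
/-!
Eigenvectors with nonzero eigenvalues lie in the range of `Q`, so the three orthonormal
eigenvectors `v₁, v₂, v₃` span it, its dimension being 3. As `Q` is symmetric this gives the
spectral expansion `Q = μ₁ v₁v₁ᵀ + μ₂ v₂v₂ᵀ + μ₃ v₃v₃ᵀ`. The identity
`½((a+b)(a-b)ᵀ + (a-b)(a+b)ᵀ) = aaᵀ - bbᵀ` with `a = √μ₁ v₁`, `b = √|μ₃| v₃` absorbs the
negative eigenvalue, and `c₃ = √μ₂ v₂` produces the remaining term.
-/

open Matrix

section

variable {K m ι : Type*} [Field K] [Fintype m]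

/-- `Orthonormal` for the dot product on `m → K`, which is not an inner product space. -/
def DotOrthonormal (v : ι → m → K) : Prop :=
  (∀ i, v i ⬝ᵥ v i = 1) ∧ Pairwise fun i j => v i ⬝ᵥ v j = 0

namespace DotOrthonormal

variable [Fintype ι] {v : ι → m → K}

theorem dotProduct_sum_smul (hv : DotOrthonormal v) (g : ι → K) (j : ι) :
    v j ⬝ᵥ ∑ i, g i • v i = g j := by
  rw [dotProduct_sum, Finset.sum_eq_single j
    (fun i _ hij => by rw [dotProduct_smul, hv.2 hij.symm, smul_zero]) (by simp),
    dotProduct_smul, hv.1, smul_eq_mul, mul_one]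

theorem linearIndependent (hv : DotOrthonormal v) : LinearIndependent K v :=
  Fintype.linearIndependent_iff.2 fun g hg j => by
    simpa [hg] using (hv.dotProduct_sum_smul g j).symm

theorem eq_sum_of_mem_span (hv : DotOrthonormal v) {x : m → K}
    (hx : x ∈ Submodule.span K (Set.range v)) : x = ∑ i, (v i ⬝ᵥ x) • v i := by
  obtain ⟨g, rfl⟩ := (Submodule.mem_span_range_iff_exists_fun K).1 hx
  simp only [hv.dotProduct_sum_smul]

end DotOrthonormal

theorem Matrix.IsSymm.dotProduct_mulVec_comm {Q : Matrix m m K} (hQ : Q.IsSymm)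
    (u w : m → K) :
    u ⬝ᵥ Q *ᵥ w = Q *ᵥ u ⬝ᵥ w := by
  rw [dotProduct_mulVec, ← mulVec_transpose, hQ]

variable [Fintype ι]

theorem Matrix.range_mulVecLin_eq_span_of_rank_eq {Q : Matrix m m K} {v : ι → m → K}
    {μ : ι → K}    (hv : LinearIndependent K v) (hμ : ∀ i, μ i ≠ 0) (hQv : ∀ i, Q *ᵥ v i = μ i • v i)
    (hrank : Q.rank = Fintype.card ι) :
    LinearMap.range Q.mulVecLin = Submodule.span K (Set.range v) := by
  symm
  refine Submodule.eq_of_le_of_finrank_le ?_ ?_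
  · rw [Submodule.span_le]
    rintro _ ⟨i, rfl⟩
    exact ⟨(μ i)⁻¹ • v i, by simp [hQv, smul_smul, hμ i]⟩
  · rw [finrank_span_eq_card hv, ← hrank, rank]

theorem Matrix.eq_sum_smul_vecMulVec_of_rank_eq {Q : Matrix m m K} {v : ι → m → K}
    {μ : ι → K}    (hQ : Q.IsSymm) (hv : DotOrthonormal v) (hμ : ∀ i, μ i ≠ 0)
    (hQv : ∀ i, Q *ᵥ v i = μ i • v i) (hrank : Q.rank = Fintype.card ι) :
    Q = ∑ i, μ i • vecMulVec (v i) (v i) := by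
  refine ext_iff_mulVec.2 fun w => ?_
  have hw : Q *ᵥ w ∈ Submodule.span K (Set.range v) := by
    rw [← range_mulVecLin_eq_span_of_rank_eq hv.linearIndependent hμ hQv hrank]
    exact ⟨w, rfl⟩
  rw [hv.eq_sum_of_mem_span hw, sum_mulVec]
  refine Finset.sum_congr rfl fun i _ => ?_
  rw [hQ.dotProduct_mulVec_comm, hQv, smul_mulVec, vecMulVec_mulVec, smul_dotProduct,
    op_smul_eq_smul, smul_smul, smul_eq_mul]

end

theorem Matrix.vecMulVec_add_sub_add_vecMulVec_sub_add {R m : Type*} [CommRing R] (a b : m → R) :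
    vecMulVec (a + b) (a - b) + vecMulVec (a - b) (a + b) =
      (2 : R) • (vecMulVec a a - vecMulVec b b) := by
  ext i j
  simp only [add_apply, smul_apply, sub_apply, vecMulVec_apply, Pi.add_apply, Pi.sub_apply,
    smul_eq_mul]
  ring

theorem Matrix.vecMulVec_sqrt_smul_self {m : Type*} {r : ℝ} (hr : 0 ≤ r) (a : m → ℝ) :
    vecMulVec (√r • a) (√r • a) = r • vecMulVec a a := by
  rw [smul_vecMulVec, vecMulVec_smul, smul_smul, Real.mul_self_sqrt hr]

theorem LinearIndependent.add_sub_smul_three {K V : Type*} [Field K] [AddCommGroup V] [Module K V]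
    {x y z : V} (h : LinearIndependent K ![x, y, z]) {s t u : K} (hs : s ≠ 0) (ht : t ≠ 0)
    (hu : u ≠ 0) (h2 : (2 : K) ≠ 0) :
    LinearIndependent K ![s • x + t • z, s • x - t • z, u • y] := by
  rw [Fintype.linearIndependent_iff] at h ⊢
  intro g hg
  have hcoef := h ![(g 0 + g 1) * s, g 2 * u, (g 0 - g 1) * t] (by
    rw [← hg]
    simp only [Fin.sum_univ_three, Matrix.cons_val]
    module)
  have hsum : g 0 + g 1 = 0 := by simpa [hs] using hcoef 0
  have hg2 : g 2 = 0 := by simpa [hu] using hcoef 1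
  have hdiff : g 0 - g 1 = 0 := by simpa [ht] using hcoef 2
  have hg0 : g 0 = 0 := by
    have : (2 : K) * g 0 = 0 := by linear_combination hsum + hdiff
    simpa [h2] using this
  intro i
  fin_cases i
  · exact hg0
  · simpa [hg0] using hsum
  · exact hg2

theorem rank3_indefinite_decomposition_general {n : ℕ} (Q : Matrix (Fin n) (Fin n) ℝ)
    (hQ : Q.IsHermitian) (hrank : Q.rank = 3)
    (μ₁ μ₂ μ₃ : ℝ) (v₁ v₂ v₃ : Fin n → ℝ)
    (hμ₁ : 0 < μ₁) (hμ₂ : 0 < μ₂) (hμ₃ : μ₃ < 0)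
    (hv₁ : Q.mulVec v₁ = μ₁ • v₁) (hv₂ : Q.mulVec v₂ = μ₂ • v₂)
    (hv₃ : Q.mulVec v₃ = μ₃ • v₃)
    (h11 : v₁ ⬝ᵥ v₁ = 1) (h22 : v₂ ⬝ᵥ v₂ = 1) (h33 : v₃ ⬝ᵥ v₃ = 1)
    (h12 : v₁ ⬝ᵥ v₂ = 0) (h13 : v₁ ⬝ᵥ v₃ = 0) (h23 : v₂ ⬝ᵥ v₃ = 0) :
    (∃ c₁ c₂ c₃ : Fin n → ℝ, c₁ ≠ 0 ∧ c₂ ≠ 0 ∧ c₃ ≠ 0 ∧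
        LinearIndependent ℝ ![c₁, c₂, c₃] ∧
        c₃ ⬝ᵥ c₁ = 0 ∧ c₃ ⬝ᵥ c₂ = 0 ∧
        Q = (1 / 2 : ℝ) • (vecMulVec c₁ c₂ + vecMulVec c₂ c₁) + vecMulVec c₃ c₃) ∧
    (let c₁ := Real.sqrt μ₁ • v₁ + Real.sqrt |μ₃| • v₃
     let c₂ := Real.sqrt μ₁ • v₁ - Real.sqrt |μ₃| • v₃
     let c₃ := Real.sqrt μ₂ • v₂
     c₁ ≠ 0 ∧ c₂ ≠ 0 ∧ c₃ ≠ 0 ∧ LinearIndependent ℝ ![c₁, c₂, c₃] ∧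
      c₃ ⬝ᵥ c₁ = 0 ∧ c₃ ⬝ᵥ c₂ = 0 ∧
      Q = (1 / 2 : ℝ) • (vecMulVec c₁ c₂ + vecMulVec c₂ c₁) + vecMulVec c₃ c₃) := by
  have hv : DotOrthonormal ![v₁, v₂, v₃] := by
    refine ⟨fun i => by fin_cases i <;> assumption, fun i j hij => ?_⟩
    fin_cases i <;> fin_cases j <;> simp_all [dotProduct_comm]
  have hspectral : Q = μ₁ • vecMulVec v₁ v₁ + μ₂ • vecMulVec v₂ v₂ + μ₃ • vecMulVec v₃ v₃ := by
    have := eq_sum_smul_vecMulVec_of_rank_eq (μ := ![μ₁, μ₂, μ₃]) hQ hv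
      (fun i => by fin_cases i <;> simp [hμ₁.ne', hμ₂.ne', hμ₃.ne])
      (fun i => by fin_cases i <;> assumption)
      (by simpa using hrank)
    simpa [Fin.sum_univ_three, add_assoc] using this
  refine (fun h => ⟨⟨_, _, _, h⟩, h⟩) ?_
  set c₁ := √μ₁ • v₁ + √|μ₃| • v₃
  set c₂ := √μ₁ • v₁ - √|μ₃| • v₃
  set c₃ := √μ₂ • v₂
  have hli : LinearIndependent ℝ ![c₁, c₂, c₃] :=
    hv.linearIndependent.add_sub_smul_three (Real.sqrt_ne_zero'.2 hμ₁)
      (Real.sqrt_ne_zero'.2 (abs_pos.2 hμ₃.ne)) (Real.sqrt_ne_zero'.2 hμ₂) two_ne_zero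
  refine ⟨hli.ne_zero 0, hli.ne_zero 1, hli.ne_zero 2, hli, ?_, ?_, ?_⟩
  · simp [c₁, c₃, dotProduct_add, dotProduct_comm v₂ v₁, h12, h23]
  · simp [c₂, c₃, dotProduct_sub, dotProduct_comm v₂ v₁, h12, h23]
  · rw [vecMulVec_add_sub_add_vecMulVec_sub_add, vecMulVec_sqrt_smul_self hμ₁.le,
      vecMulVec_sqrt_smul_self (abs_nonneg _), vecMulVec_sqrt_smul_self hμ₂.le, abs_of_neg hμ₃,
      hspectral]
    module

/-- Appendix B (forward direction): a real symmetric matrix `Q` of rank 3 with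
exactly two positive and one negative eigenvalue (counting multiplicity) can
be written as `Q = (1/2)(c₁c₂ᵀ + c₂c₁ᵀ) + c₃c₃ᵀ` for nonzero, linearly
independent `c₁, c₂, c₃` with `c₃` orthogonal to `c₁` and `c₂`.  Explicitly,
if `(μ₁, v₁), (μ₂, v₂), (μ₃, v₃)` are orthonormal eigenpairs with
`μ₁, μ₂ > 0 > μ₃`, then `c₁ = √μ₁ v₁ + √|μ₃| v₃`, `c₂ = √μ₁ v₁ − √|μ₃| v₃`,
and `c₃ = √μ₂ v₂` work. -/
theorem rank3_indefinite_decomposition {n : ℕ} (Q : Matrix (Fin n) (Fin n) ℝ)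
    (hQ : Q.IsHermitian) (hrank : Q.rank = 3)
    (hpos : (Finset.univ.filter fun i => 0 < hQ.eigenvalues i).card = 2)
    (hneg : (Finset.univ.filter fun i => hQ.eigenvalues i < 0).card = 1)
    (μ₁ μ₂ μ₃ : ℝ) (v₁ v₂ v₃ : Fin n → ℝ)
    (hμ₁ : 0 < μ₁) (hμ₂ : 0 < μ₂) (hμ₃ : μ₃ < 0)
    (hv₁ : Q.mulVec v₁ = μ₁ • v₁) (hv₂ : Q.mulVec v₂ = μ₂ • v₂)
    (hv₃ : Q.mulVec v₃ = μ₃ • v₃)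
    (h11 : v₁ ⬝ᵥ v₁ = 1) (h22 : v₂ ⬝ᵥ v₂ = 1) (h33 : v₃ ⬝ᵥ v₃ = 1)
    (h12 : v₁ ⬝ᵥ v₂ = 0) (h13 : v₁ ⬝ᵥ v₃ = 0) (h23 : v₂ ⬝ᵥ v₃ = 0) :
    (∃ c₁ c₂ c₃ : Fin n → ℝ, c₁ ≠ 0 ∧ c₂ ≠ 0 ∧ c₃ ≠ 0 ∧
        LinearIndependent ℝ ![c₁, c₂, c₃] ∧
        c₃ ⬝ᵥ c₁ = 0 ∧ c₃ ⬝ᵥ c₂ = 0 ∧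
        Q = (1 / 2 : ℝ) • (vecMulVec c₁ c₂ + vecMulVec c₂ c₁) + vecMulVec c₃ c₃) ∧
    (let c₁ := Real.sqrt μ₁ • v₁ + Real.sqrt |μ₃| • v₃
     let c₂ := Real.sqrt μ₁ • v₁ - Real.sqrt |μ₃| • v₃
     let c₃ := Real.sqrt μ₂ • v₂
     c₁ ≠ 0 ∧ c₂ ≠ 0 ∧ c₃ ≠ 0 ∧ LinearIndependent ℝ ![c₁, c₂, c₃] ∧
      c₃ ⬝ᵥ c₁ = 0 ∧ c₃ ⬝ᵥ c₂ = 0 ∧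
      Q = (1 / 2 : ℝ) • (vecMulVec c₁ c₂ + vecMulVec c₂ c₁) + vecMulVec c₃ c₃) :=
  rank3_indefinite_decomposition_general Q hQ hrank μ₁ μ₂ μ₃ v₁ v₂ v₃ hμ₁ hμ₂ hμ₃ hv₁ hv₂ hv₃ h11
    h22 h33 h12 h13 h23
end

section
/- Let c₁, c₂, c₃ ∈ ℝⁿ be nonzero, linearly independent vectors with c₃ orthogonal to both c₁ and c₂, and define Q = (1/2)(c₁c₂ᵀ + c₂c₁ᵀ) + c₃c₃ᵀ. Then Q is a real symmetric matrix of rank 3 with exactly two positive eigenvalues and exactly one negative eigenvalue (counting multiplicity); in particular, ‖c₃‖² is a positive eigenvalue of Q with eigenvector c₃. -/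
/-!
Let `C` be the `3 × n` matrix with rows `c₁, c₂, c₃` and `G` the matrix of the quadratic form
`x y + z²` on `ℝ³`, so that `Q = Cᵀ G C`. Independent rows give a right inverse `R` of `C`, hence
`Rᵀ Q R = G`: the plane `x = y` on which `G` is positive definite and the direction
`(1, -1, 0)` on which it is negative pull back to `Q`, so `Q` has at least two positive and one
negative eigenvalue, and `rank Q ≤ 3` leaves room for no more. Orthogonality of `c₃` to `c₁` and
`c₂` makes `c₃` an eigenvector.
-/

open Matrix Finset
open scoped ComplexOrder

namespace Matrix

section Inertia

variable {𝕜 m n : Type*} [RCLike 𝕜] [Fintype m] [Fintype n] [DecidableEq n] {A : Matrix n n 𝕜}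

theorem IsHermitian.card_pos_add_card_neg_eigenvalues (hA : A.IsHermitian) :
    #{i | 0 < hA.eigenvalues i} + #{i | hA.eigenvalues i < 0} = A.rank := by
  rw [hA.rank_eq_card_non_zero_eigs, Fintype.card_subtype, ← card_union_of_disjoint
    (disjoint_filter.mpr fun _ _ hpos hneg => hneg.not_gt hpos), ← filter_or]
  simp only [ne_iff_lt_or_gt, or_comm]

theorem IsHermitian.exists_eigenvalues_neg (hA : A.IsHermitian) (hA' : ¬A.PosSemidef) :
    ∃ i, hA.eigenvalues i < 0 := by
  contrapose! hA'
  exact hA.posSemidef_iff_eigenvalues_nonneg.mpr hA'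

theorem IsHermitian.card_le_card_pos_eigenvalues (hA : A.IsHermitian) {M : Matrix n m 𝕜}
    (hM : (Mᴴ * A * M).PosDef) : Fintype.card m ≤ #{i | 0 < hA.eigenvalues i} := by
  classical
  set N := star (hA.eigenvectorUnitary : Matrix n n 𝕜) * M
  set Dpos : Matrix n n 𝕜 := diagonal fun i => (((hA.eigenvalues i)⁺ : ℝ) : 𝕜)
  set Dneg : Matrix n n 𝕜 := diagonal fun i => (((hA.eigenvalues i)⁻ : ℝ) : 𝕜)
  have hsplit : Mᴴ * A * M = Nᴴ * Dpos * N - Nᴴ * Dneg * N := by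
    conv_lhs => rw [hA.spectral_theorem, Unitary.conjStarAlgAut_apply]
    have hdiag : diagonal (RCLike.ofReal ∘ hA.eigenvalues) = Dpos - Dneg := by
      simp only [Dpos, Dneg, diagonal_sub, ← RCLike.ofReal_sub, posPart_sub_negPart]; rfl
    simp only [hdiag, N, conjTranspose_mul, star_eq_conjTranspose, conjTranspose_conjTranspose,
      Matrix.mul_sub, Matrix.sub_mul, Matrix.mul_assoc]
  -- `Nᴴ Dpos N` dominates `Mᴴ A M`, so it is invertible and its rank is at most that of `Dpos`.
  have hDpos : (Nᴴ * Dpos * N).PosDef := by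
    have hDneg : Dneg.PosSemidef := posSemidef_diagonal_iff.mpr fun i => by simp
    simpa [hsplit] using hM.add_posSemidef (hDneg.conjTranspose_mul_mul_same N)
  calc Fintype.card m = (Nᴴ * Dpos * N).rank := (rank_of_isUnit _ hDpos.isUnit).symm
    _ ≤ Dpos.rank := (rank_mul_le_left _ _).trans (rank_mul_le_right _ _)
    _ = #{i | 0 < hA.eigenvalues i} := by
      rw [rank_diagonal, Fintype.card_subtype]
      simp

end Inertia

theorem exists_mul_eq_one_of_linearIndependent_row {K m n : Type*} [Field K] [Fintype m]
    [DecidableEq m] [Fintype n] {C : Matrix m n K} (hC : LinearIndependent K C.row) :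
    ∃ R : Matrix n m K, C * R = 1 := by
  rw [← mulVec_surjective_iff_exists_right_inverse, ← coe_mulVecLin, ← LinearMap.range_eq_top]
  apply Submodule.eq_top_of_finrank_eq
  rw [Module.finrank_fintype_fun_eq_card, ← hC.rank_matrix]
  rfl

end Matrix

noncomputable def xyAddZSq : Matrix (Fin 3) (Fin 3) ℝ := !![0, 1 / 2, 0; 1 / 2, 0, 0; 0, 0, 1]

theorem xyAddZSq_isHermitian : xyAddZSq.IsHermitian := by
  ext i j
  fin_cases i <;> fin_cases j <;> simp [xyAddZSq]

theorem conjTranspose_mul_xyAddZSq_mul_eq_one :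
    (!![1, 0; 1, 0; 0, 1] : Matrix (Fin 3) (Fin 2) ℝ)ᴴ * xyAddZSq *
      !![(1 : ℝ), 0; 1, 0; 0, 1] = 1 := by
  ext i j
  fin_cases i <;> fin_cases j <;> simp [xyAddZSq, Matrix.mul_apply, Fin.sum_univ_three, ← two_mul]

theorem not_posSemidef_xyAddZSq : ¬xyAddZSq.PosSemidef := fun h => by
  have hv : star ![(1 : ℝ), -1, 0] ⬝ᵥ xyAddZSq *ᵥ ![1, -1, 0] = -1 := by
    simp [xyAddZSq, dotProduct, mulVec, Fin.sum_univ_three, ← two_mul]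
  linarith [h.dotProduct_mulVec_nonneg ![1, -1, 0]]

theorem half_smul_vecMulVec_add_vecMulVec_eq_conjTranspose_xyAddZSq {ι : Type*} [Fintype ι]
    (c₁ c₂ c₃ : ι → ℝ) :
    (1 / 2 : ℝ) • (vecMulVec c₁ c₂ + vecMulVec c₂ c₁) + vecMulVec c₃ c₃ =
      (of ![c₁, c₂, c₃])ᴴ * xyAddZSq * of ![c₁, c₂, c₃] := by
  ext i j
  simp only [xyAddZSq, Matrix.add_apply, Matrix.smul_apply, vecMulVec_apply,
    conjTranspose_eq_transpose_of_trivial, mul_apply, transpose_apply, of_apply,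
    Fin.sum_univ_three, Matrix.cons_val]
  ring

theorem rank3_indefinite_of_decomposition_general {n : ℕ} (c₁ c₂ c₃ : Fin n → ℝ)
    (hli : LinearIndependent ℝ ![c₁, c₂, c₃])
    (ho1 : c₃ ⬝ᵥ c₁ = 0) (ho2 : c₃ ⬝ᵥ c₂ = 0)
    (Q : Matrix (Fin n) (Fin n) ℝ)
    (hQdef : Q = (1 / 2 : ℝ) • (vecMulVec c₁ c₂ + vecMulVec c₂ c₁) + vecMulVec c₃ c₃) :
    ∃ hQ : Q.IsHermitian,
      Q.rank = 3 ∧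
      (Finset.univ.filter fun i => 0 < hQ.eigenvalues i).card = 2 ∧
      (Finset.univ.filter fun i => hQ.eigenvalues i < 0).card = 1 ∧
      0 < c₃ ⬝ᵥ c₃ ∧ Q.mulVec c₃ = (c₃ ⬝ᵥ c₃) • c₃ := by
  have hQc₃ : Q *ᵥ c₃ = (c₃ ⬝ᵥ c₃) • c₃ := by
    simp [hQdef, add_mulVec, smul_mulVec, vecMulVec_mulVec, dotProduct_comm _ c₃, ho1, ho2]
  set C : Matrix (Fin 3) (Fin n) ℝ := of ![c₁, c₂, c₃]
  have hQC : Q = Cᴴ * xyAddZSq * C :=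
    hQdef.trans (half_smul_vecMulVec_add_vecMulVec_eq_conjTranspose_xyAddZSq ..)
  obtain ⟨R, hCR⟩ := exists_mul_eq_one_of_linearIndependent_row (C := C) hli
  have hRQR : Rᴴ * Q * R = xyAddZSq := by
    rw [hQC, ← Matrix.mul_assoc, ← Matrix.mul_assoc, ← conjTranspose_mul, Matrix.mul_assoc, hCR,
      conjTranspose_one, Matrix.one_mul, Matrix.mul_one]
  have hQ : Q.IsHermitian := hQC ▸ isHermitian_conjTranspose_mul_mul C xyAddZSq_isHermitian
  have hrank : Q.rank ≤ 3 :=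
    hQC ▸ (rank_mul_le_left _ _).trans ((rank_mul_le_left _ _).trans (rank_le_width _))
  have hpos : 2 ≤ #{i | 0 < hQ.eigenvalues i} := by
    set P : Matrix (Fin 3) (Fin 2) ℝ := !![1, 0; 1, 0; 0, 1]
    refine hQ.card_le_card_pos_eigenvalues (M := R * P) ?_
    have hconj : (R * P)ᴴ * Q * (R * P) = Pᴴ * (Rᴴ * Q * R) * P := by
      simp only [conjTranspose_mul, Matrix.mul_assoc]
    rw [hconj, hRQR, conjTranspose_mul_xyAddZSq_mul_eq_one]
    exact PosDef.one
  obtain ⟨i, hi⟩ := hQ.exists_eigenvalues_neg fun hQ' =>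
    not_posSemidef_xyAddZSq (hRQR ▸ hQ'.conjTranspose_mul_mul_same R)
  have hneg : 1 ≤ #{i | hQ.eigenvalues i < 0} := card_pos.mpr ⟨i, by simpa using hi⟩
  have hsum := hQ.card_pos_add_card_neg_eigenvalues
  have hc₃ : 0 < c₃ ⬝ᵥ c₃ := by simpa using dotProduct_star_self_pos_iff.mpr (hli.ne_zero 2)
  exact ⟨hQ, by omega, by omega, by omega, hc₃, hQc₃⟩

/-- Appendix B (converse direction): for nonzero, linearly independent
`c₁, c₂, c₃` with `c₃` orthogonal to `c₁` and `c₂`, the matrix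
`Q = (1/2)(c₁c₂ᵀ + c₂c₁ᵀ) + c₃c₃ᵀ` is symmetric of rank 3 with exactly two
positive and one negative eigenvalue (counting multiplicity); in particular
`‖c₃‖² = c₃ᵀc₃` is a positive eigenvalue of `Q` with eigenvector `c₃`. -/
theorem rank3_indefinite_of_decomposition {n : ℕ} (c₁ c₂ c₃ : Fin n → ℝ)
    (h1 : c₁ ≠ 0) (h2 : c₂ ≠ 0) (h3 : c₃ ≠ 0)
    (hli : LinearIndependent ℝ ![c₁, c₂, c₃])
    (ho1 : c₃ ⬝ᵥ c₁ = 0) (ho2 : c₃ ⬝ᵥ c₂ = 0)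
    (Q : Matrix (Fin n) (Fin n) ℝ)
    (hQdef : Q = (1 / 2 : ℝ) • (vecMulVec c₁ c₂ + vecMulVec c₂ c₁) + vecMulVec c₃ c₃) :
    ∃ hQ : Q.IsHermitian,
      Q.rank = 3 ∧
      (Finset.univ.filter fun i => 0 < hQ.eigenvalues i).card = 2 ∧
      (Finset.univ.filter fun i => hQ.eigenvalues i < 0).card = 1 ∧
      0 < c₃ ⬝ᵥ c₃ ∧ Q.mulVec c₃ = (c₃ ⬝ᵥ c₃) • c₃ :=
  rank3_indefinite_of_decomposition_general c₁ c₂ c₃ hli ho1 ho2 Q hQdef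
end

section
/- Let m = n(n+1)/2 and let z : ℝⁿ → ℝᵐ map x to the vector of quadratic monomials (x₁², x₁x₂, …, x₁xₙ, x₂², x₂x₃, …, xₙ²). Let E be a real symmetric positive definite n×n matrix, α > 0, A ∈ ℝⁿˣⁿ, B ∈ ℝⁿˣᵐ, and let M₁, …, M_k be real symmetric (n+m)×(n+m) matrices such that for each i and every x ∈ ℝⁿ with xᵀEx ≤ α², the vector v = (x, z(x)) ∈ ℝⁿ⁺ᵐ satisfies vᵀM_i v ≥ 0. Suppose there exist a real symmetric n×n matrix P, scalars ξ₁,…,ξ_k ≥ 0, and ε > 0 such that the symmetric matrix [[AᵀP + PA, PB],[BᵀP, 0]] + Σᵢ ξᵢ Mᵢ − [[−εI, 0],[0, 0]] is negative definite. Then for every nonzero x ∈ ℝⁿ with xᵀEx ≤ α², one has 2 xᵀ P (Ax + B z(x)) < −ε xᵀx. -/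
/-!
Evaluate the linear matrix inequality at `v = (x, z(x))`. The quadratic constraints make every
S-procedure term `ξᵢ vᵀMᵢv` nonnegative on the ellipsoid, so the remaining form is negative; its
first block is `2 xᵀP(Ax + Bz(x))` (by symmetry of `P`) and its `ε`-block is `-ε xᵀx`.
-/

open Matrix

/-- The list of quadratic monomials of `x ∈ ℝⁿ` in the order
`x₁², x₁x₂, …, x₁xₙ, x₂², x₂x₃, …, xₙ²`. -/
def quadMonomialList {n : ℕ} (x : Fin n → ℝ) : List ℝ :=
  (List.finRange n).flatMap fun i =>
    ((List.finRange n).filter fun j => decide (i ≤ j)).map fun j => x i * x j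

/-- The vector `z(x) ∈ ℝᵐ` of quadratic monomials of `x ∈ ℝⁿ`
(with `m = n(n+1)/2`). -/
def quadMonomialVec {n : ℕ} (m : ℕ) (x : Fin n → ℝ) : Fin m → ℝ :=
  fun l => (quadMonomialList x).getD l.val 0

section QuadraticForms

variable {R ι n m : Type*} [CommRing R] [Fintype ι] [Fintype n] [Fintype m]

theorem Matrix.IsSymm.dotProduct_mulVec_comm_s17 {P : Matrix n n R} (hP : P.IsSymm)
    (x y : n → R) : x ⬝ᵥ P *ᵥ y = y ⬝ᵥ P *ᵥ x := by
  simpa only [hP.eq] using dotProduct_transpose_mulVec P x y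

theorem dotProduct_sum_smul_mulVec (ξ : ι → R) (M : ι → Matrix n n R) (v : n → R) :
    v ⬝ᵥ (∑ i, ξ i • M i) *ᵥ v = ∑ i, ξ i * (v ⬝ᵥ M i *ᵥ v) := by
  simp only [sum_mulVec, dotProduct_sum, smul_mulVec, dotProduct_smul, smul_eq_mul]

/-- This is the derivative of `V(x) = xᵀPx` along `ẋ = Ax + Bz`. -/
theorem sumElim_dotProduct_fromBlocks_lyapunov_mulVec {P A : Matrix n n R}
    (hP : P.IsSymm) (B : Matrix n m R) (x : n → R) (z : m → R) :
    Sum.elim x z ⬝ᵥ fromBlocks (Aᵀ * P + P * A) (P * B) (Bᵀ * P) 0 *ᵥ Sum.elim x z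
      = 2 * (x ⬝ᵥ P *ᵥ (A *ᵥ x + B *ᵥ z)) := by
  simp only [fromBlocks_mulVec, Sum.elim_comp_inl, Sum.elim_comp_inr,
    sumElim_dotProduct_sumElim, zero_mulVec, add_zero, add_mulVec, ← mulVec_mulVec,
    dotProduct_add, mulVec_add, dotProduct_transpose_mulVec]
  rw [dotProduct_comm (P *ᵥ x), dotProduct_comm (P *ᵥ x), hP.dotProduct_mulVec_comm_s17 (A *ᵥ x),
    hP.dotProduct_mulVec_comm_s17 (B *ᵥ z)]
  ring

theorem sumElim_dotProduct_fromBlocks_smul_one_mulVec [DecidableEq n] (c : R) (x : n → R)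
    (z : m → R) :
    Sum.elim x z ⬝ᵥ fromBlocks (c • (1 : Matrix n n R)) 0 0 (0 : Matrix m m R) *ᵥ Sum.elim x z
      = c * (x ⬝ᵥ x) := by
  simp [fromBlocks_mulVec, sumElim_dotProduct_sumElim, smul_mulVec]

end QuadraticForms

/-- The S-procedure. -/
theorem dotProduct_mulVec_neg_of_posDef_neg_add_sum_smul {ι k : Type*} [Fintype ι] [Fintype k]
    {L : Matrix ι ι ℝ} {M : k → Matrix ι ι ℝ} {ξ : k → ℝ} (hLMI : (-(L + ∑ i, ξ i • M i)).PosDef)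
    (hξ : ∀ i, 0 ≤ ξ i) {v : ι → ℝ} (hv : v ≠ 0) (hM : ∀ i, 0 ≤ v ⬝ᵥ M i *ᵥ v) :
    v ⬝ᵥ L *ᵥ v < 0 := by
  have hpos := hLMI.dotProduct_mulVec_pos hv
  have hS : 0 ≤ v ⬝ᵥ (∑ i, ξ i • M i) *ᵥ v := by
    rw [dotProduct_sum_smul_mulVec]
    exact Finset.sum_nonneg fun i _ => mul_nonneg (hξ i) (hM i)
  simp only [star_trivial, neg_mulVec, dotProduct_neg, add_mulVec, dotProduct_add] at hpos
  linarith

theorem dissipation_strict_decrease_general {n m k : ℕ}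
    (E : Matrix (Fin n) (Fin n) ℝ) (α : ℝ)
    (A : Matrix (Fin n) (Fin n) ℝ) (B : Matrix (Fin n) (Fin m) ℝ)
    (M : Fin k → Matrix (Fin n ⊕ Fin m) (Fin n ⊕ Fin m) ℝ)
    (hQC : ∀ (i : Fin k) (x : Fin n → ℝ), x ⬝ᵥ E.mulVec x ≤ α ^ 2 →
      0 ≤ Sum.elim x (quadMonomialVec m x) ⬝ᵥ
            (M i).mulVec (Sum.elim x (quadMonomialVec m x)))
    (P : Matrix (Fin n) (Fin n) ℝ) (hP : P.IsHermitian)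
    (ξ : Fin k → ℝ) (hξ : ∀ i, 0 ≤ ξ i) (ε : ℝ)
    (hLMI : (-(fromBlocks (Aᵀ * P + P * A) (P * B) (Bᵀ * P) 0
            + ∑ i, ξ i • M i
            - fromBlocks (-(ε • (1 : Matrix (Fin n) (Fin n) ℝ))) 0 0 0)).PosDef)
    (x : Fin n → ℝ) (hx0 : x ≠ 0) (hx : x ⬝ᵥ E.mulVec x ≤ α ^ 2) :
    2 * (x ⬝ᵥ P.mulVec (A.mulVec x + B.mulVec (quadMonomialVec m x)))
      < -ε * (x ⬝ᵥ x) := by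
  set v := Sum.elim x (quadMonomialVec m x)
  have hv : v ≠ 0 := fun h => hx0 (funext fun i => congrFun h (Sum.inl i))
  rw [add_sub_right_comm] at hLMI
  have hneg := dotProduct_mulVec_neg_of_posDef_neg_add_sum_smul hLMI hξ hv (hQC · x hx)
  rw [sub_mulVec, dotProduct_sub, sumElim_dotProduct_fromBlocks_lyapunov_mulVec
    (isHermitian_iff_isSymm.mp hP), ← neg_smul, sumElim_dotProduct_fromBlocks_smul_one_mulVec]
    at hneg
  linarith

/-- Key step in Theorem 1: if the nonlinearity `z` satisfies the quadratic
constraints `M₁, …, M_k` on the ellipsoid `{x : xᵀEx ≤ α²}` and the linear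
matrix inequality `[[AᵀP+PA, PB],[BᵀP, 0]] + Σᵢ ξᵢ Mᵢ − [[−εI, 0],[0, 0]] ≺ 0`
holds with `ξᵢ ≥ 0`, then `2 xᵀP(Ax + Bz(x)) < −ε xᵀx` for every nonzero `x`
in the ellipsoid. -/
theorem dissipation_strict_decrease {n m k : ℕ} (hm : m = n * (n + 1) / 2)
    (E : Matrix (Fin n) (Fin n) ℝ) (hE : E.PosDef) (α : ℝ) (hα : 0 < α)
    (A : Matrix (Fin n) (Fin n) ℝ) (B : Matrix (Fin n) (Fin m) ℝ)
    (M : Fin k → Matrix (Fin n ⊕ Fin m) (Fin n ⊕ Fin m) ℝ)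
    (hMsym : ∀ i, (M i).IsHermitian)
    (hQC : ∀ (i : Fin k) (x : Fin n → ℝ), x ⬝ᵥ E.mulVec x ≤ α ^ 2 →
      0 ≤ Sum.elim x (quadMonomialVec m x) ⬝ᵥ
            (M i).mulVec (Sum.elim x (quadMonomialVec m x)))
    (P : Matrix (Fin n) (Fin n) ℝ) (hP : P.IsHermitian)
    (ξ : Fin k → ℝ) (hξ : ∀ i, 0 ≤ ξ i) (ε : ℝ) (hε : 0 < ε)
    (hLMI : (-(fromBlocks (Aᵀ * P + P * A) (P * B) (Bᵀ * P) 0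
            + ∑ i, ξ i • M i
            - fromBlocks (-(ε • (1 : Matrix (Fin n) (Fin n) ℝ))) 0 0 0)).PosDef)
    (x : Fin n → ℝ) (hx0 : x ≠ 0) (hx : x ⬝ᵥ E.mulVec x ≤ α ^ 2) :
    2 * (x ⬝ᵥ P.mulVec (A.mulVec x + B.mulVec (quadMonomialVec m x)))
      < -ε * (x ⬝ᵥ x) :=
  dissipation_strict_decrease_general E α A B M hQC P hP ξ hξ ε hLMI x hx0 hx
end

section
/- Let m = n(n+1)/2 and let z : ℝⁿ → ℝᵐ map x to the vector of quadratic monomials (x₁², x₁x₂, …, x₁xₙ, x₂², x₂x₃, …, xₙ²). Let E be a real symmetric positive definite n×n matrix, α > 0, A ∈ ℝⁿˣⁿ, B ∈ ℝⁿˣᵐ, and let M₁, …, M_k be real symmetric (n+m)×(n+m) matrices such that for each i and every x ∈ ℝⁿ with xᵀEx ≤ α², the vector v = (x, z(x)) satisfies vᵀM_i v ≥ 0. Suppose there exist a real symmetric n×n matrix P, scalars ξ₁,…,ξ_k ≥ 0, ε > 0 and r > 0 such that (i) [[AᵀP + PA, PB],[BᵀP, 0]] + Σᵢ ξᵢ Mᵢ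 − [[−εI, 0],[0, 0]] is negative definite, and (ii) (1/α²)E ⪯ P ⪯ (1/r²)I. Then for every differentiable trajectory x : [0,∞) → ℝⁿ satisfying x'(t) = A x(t) + B z(x(t)) for all t ≥ 0 and x(0)ᵀx(0) ≤ r², one has x(t)ᵀP x(t) ≤ 1 for all t ≥ 0 and x(t) → 0 as t → ∞. -/
open Matrix

/-!
`V(y) = yᵀPy` is a Lyapunov function. By `(1/α²)E ⪯ P` the sublevel set `{V ≤ 1}` lies in the
ellipsoid `𝓔_α`, where the quadratic constraints hold, so the S-procedure turns the LMI into
`V̇ ≤ -ε|x|²` there, and `P ⪯ (1/r²)I` turns this into `V̇ ≤ -εr²V`. A fencing argument then gives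
`V(x(t)) ≤ e^{-εr²t/2}` from `V(x(0)) ≤ 1`: the trajectory stays in `{V ≤ 1}` and, `P` being
positive definite, converges to the origin.
-/

open Filter Topology

section

variable {ι : Type*} [Fintype ι]

theorem HasDerivAt.dotProduct {f g : ℝ → ι → ℝ} {f' g' : ι → ℝ} {t : ℝ}
    (hf : HasDerivAt f f' t) (hg : HasDerivAt g g' t) :
    HasDerivAt (fun s => f s ⬝ᵥ g s) (f' ⬝ᵥ g t + f t ⬝ᵥ g') t := by
  have := HasDerivAt.fun_sum (u := Finset.univ) fun i _ =>
    (hasDerivAt_pi.1 hf i).mul (hasDerivAt_pi.1 hg i)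
  simp only [Finset.sum_add_distrib, Pi.mul_apply] at this
  exact this

theorem HasDerivAt.const_mulVec {f : ℝ → ι → ℝ} {f' : ι → ℝ} {t : ℝ}
    (P : Matrix ι ι ℝ) (hf : HasDerivAt f f' t) :
    HasDerivAt (fun s => P *ᵥ f s) (P *ᵥ f') t :=
  P.mulVecLin.toContinuousLinearMap.hasFDerivAt.comp_hasDerivAt t hf

/-- Fencing by `c e^{-κt}`: at a first contact `V = c e^{-κt} ≤ c`, hence `V̇ ≤ -KV < -κV`,
which is the slope of the fence. -/
theorem le_mul_exp_of_hasDerivAt_le_neg_mul {V D : ℝ → ℝ} {c K κ : ℝ} (hc : 0 < c)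
    (hκ₀ : 0 ≤ κ) (hκ : κ < K) (hV : ∀ t, 0 ≤ t → HasDerivAt V (D t) t) (hV₀ : V 0 ≤ c)
    (hD : ∀ t, 0 ≤ t → V t ≤ c → D t ≤ -(K * V t)) {t : ℝ} (ht : 0 ≤ t) :
    V t ≤ c * Real.exp (-(κ * t)) := by
  have hB : ∀ s, HasDerivAt (fun s => c * Real.exp (-(κ * s)))
      (c * (Real.exp (-(κ * s)) * -(κ * 1))) s := fun s =>
    (((hasDerivAt_id s).const_mul κ).neg.exp).const_mul c
  refine image_le_of_deriv_right_lt_deriv_boundary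
    (fun s hs => (hV s hs.1).continuousAt.continuousWithinAt)
    (fun s hs => (hV s hs.1).hasDerivWithinAt) (by simpa using hV₀) hB ?_ ⟨ht, le_rfl⟩
  intro s hs hVs
  have hexp : 0 < Real.exp (-(κ * s)) := Real.exp_pos _
  have hexp_le : Real.exp (-(κ * s)) ≤ 1 := Real.exp_le_one_iff.2 (by nlinarith [hs.1])
  have hDs := hD s hs.1 (hVs.trans_le (by nlinarith))
  rw [hVs] at hDs
  nlinarith [mul_pos hc hexp]

namespace Matrix

theorem dotProduct_mulVec_smul_self (P : Matrix ι ι ℝ) (a : ℝ) (y : ι → ℝ) :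
    (a • y) ⬝ᵥ P *ᵥ (a • y) = a ^ 2 * (y ⬝ᵥ P *ᵥ y) := by
  simp only [mulVec_smul, dotProduct_smul, smul_dotProduct, smul_eq_mul]
  ring

theorem dotProduct_mulVec_le_of_posSemidef_sub {P Q : Matrix ι ι ℝ} (h : (Q - P).PosSemidef)
    (y : ι → ℝ) : y ⬝ᵥ P *ᵥ y ≤ y ⬝ᵥ Q *ᵥ y := by
  have := h.dotProduct_mulVec_nonneg y
  rw [star_trivial, sub_mulVec, dotProduct_sub] at this
  linarith

theorem PosDef.exists_pos_mul_norm_sq_le {P : Matrix ι ι ℝ} (hP : P.PosDef) :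
    ∃ c > 0, ∀ y : ι → ℝ, c * ‖y‖ ^ 2 ≤ y ⬝ᵥ P *ᵥ y := by
  rcases isEmpty_or_nonempty ι with hι | hι
  · exact ⟨1, one_pos, fun y => by simp [Subsingleton.elim y 0]⟩
  have hq : Continuous fun y : ι → ℝ => y ⬝ᵥ P *ᵥ y :=
    continuous_id.dotProduct (continuous_const.matrix_mulVec continuous_id)
  obtain ⟨u, hu, hmin⟩ := (isCompact_sphere (0 : ι → ℝ) 1).exists_isMinOn
    (NormedSpace.sphere_nonempty.2 zero_le_one) hq.continuousOn
  have hu0 : u ≠ 0 := ne_zero_of_mem_unit_sphere ⟨u, hu⟩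
  refine ⟨u ⬝ᵥ P *ᵥ u, by simpa using hP.dotProduct_mulVec_pos hu0, fun y => ?_⟩
  rcases eq_or_ne y 0 with rfl | hy
  · simp
  have hy' : ‖y‖ ≠ 0 := norm_ne_zero_iff.2 hy
  have hyu : ‖y‖⁻¹ • y ∈ Metric.sphere (0 : ι → ℝ) 1 := by
    simp [norm_smul, hy']
  calc u ⬝ᵥ P *ᵥ u * ‖y‖ ^ 2 ≤ (‖y‖⁻¹ • y) ⬝ᵥ P *ᵥ (‖y‖⁻¹ • y) * ‖y‖ ^ 2 := by
        gcongr; exact hmin hyu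
    _ = y ⬝ᵥ P *ᵥ y := by
        rw [dotProduct_mulVec_smul_self]; field_simp

theorem PosDef.tendsto_zero_of_tendsto_dotProduct_mulVec {α : Type*} {l : Filter α}
    {P : Matrix ι ι ℝ} (hP : P.PosDef) {f : α → ι → ℝ}
    (hf : Tendsto (fun a => f a ⬝ᵥ P *ᵥ f a) l (𝓝 0)) : Tendsto f l (𝓝 0) := by
  obtain ⟨c, hc, hcP⟩ := hP.exists_pos_mul_norm_sq_le
  have hbound : ∀ a, ‖f a‖ ≤ √(c⁻¹ * (f a ⬝ᵥ P *ᵥ f a)) := fun a => by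
    simpa using Real.abs_le_sqrt ((le_inv_mul_iff₀ hc).2 (hcP (f a)))
  have hlim : Tendsto (fun a => √(c⁻¹ * (f a ⬝ᵥ P *ᵥ f a))) l (𝓝 0) := by
    simpa using (hf.const_mul c⁻¹).sqrt
  exact squeeze_zero_norm hbound hlim

theorem dotProduct_mulVec_le_of_sProcedure {ν : Type*} [Fintype ν] {L F : Matrix ι ι ℝ}
    {M : ν → Matrix ι ι ℝ} {ξ : ν → ℝ} (hξ : ∀ i, 0 ≤ ξ i)
    (hLMI : (-(L + ∑ i, ξ i • M i - F)).PosSemidef) {v : ι → ℝ}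
    (hv : ∀ i, 0 ≤ v ⬝ᵥ M i *ᵥ v) : v ⬝ᵥ L *ᵥ v ≤ v ⬝ᵥ F *ᵥ v := by
  have hsum : 0 ≤ v ⬝ᵥ (∑ i, ξ i • M i) *ᵥ v := by
    simp only [sum_mulVec, dotProduct_sum, smul_mulVec, dotProduct_smul, smul_eq_mul]
    exact Finset.sum_nonneg fun i _ => mul_nonneg (hξ i) (hv i)
  have := hLMI.dotProduct_mulVec_nonneg v
  simp only [star_trivial, neg_mulVec, dotProduct_neg, sub_mulVec, add_mulVec, dotProduct_sub,
    dotProduct_add] at this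
  linarith

variable {κ : Type*} [Fintype κ]

theorem sumElim_dotProduct_fromBlocks_lyapunov_mulVec_sumElim
    (A P : Matrix ι ι ℝ) (B : Matrix ι κ ℝ) (y : ι → ℝ) (z : κ → ℝ) :
    Sum.elim y z ⬝ᵥ fromBlocks (Aᵀ * P + P * A) (P * B) (Bᵀ * P) 0 *ᵥ Sum.elim y z
      = (A *ᵥ y + B *ᵥ z) ⬝ᵥ P *ᵥ y + y ⬝ᵥ P *ᵥ (A *ᵥ y + B *ᵥ z) := by
  simp only [fromBlocks_mulVec, sumElim_dotProduct_sumElim, add_mulVec, zero_mulVec,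
    add_zero, dotProduct_add, mulVec_add, add_dotProduct, ← mulVec_mulVec]
  rw [dotProduct_mulVec y Aᵀ, vecMul_transpose, dotProduct_mulVec z Bᵀ, vecMul_transpose]
  simp only [Sum.elim_comp_inl, Sum.elim_comp_inr]
  ring

theorem sumElim_dotProduct_fromBlocks_neg_smul_one_mulVec_sumElim [DecidableEq ι]
    (ε : ℝ) (y : ι → ℝ) (z : κ → ℝ) :
    Sum.elim y z ⬝ᵥ fromBlocks (-(ε • (1 : Matrix ι ι ℝ))) 0 0 0 *ᵥ Sum.elim y z
      = -(ε * (y ⬝ᵥ y)) := by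
  simp [fromBlocks_mulVec, sumElim_dotProduct_sumElim, neg_mulVec, smul_mulVec]

theorem lyapunov_deriv_le_of_posSemidef {ν : Type*} [Fintype ν] [DecidableEq ι]
    {A P : Matrix ι ι ℝ} {B : Matrix ι κ ℝ} {M : ν → Matrix (ι ⊕ κ) (ι ⊕ κ) ℝ} {ξ : ν → ℝ}
    {ε : ℝ} (hξ : ∀ i, 0 ≤ ξ i)
    (hLMI : (-(fromBlocks (Aᵀ * P + P * A) (P * B) (Bᵀ * P) 0 + ∑ i, ξ i • M i
      - fromBlocks (-(ε • (1 : Matrix ι ι ℝ))) 0 0 0)).PosSemidef)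
    {y : ι → ℝ} {z : κ → ℝ} (hyz : ∀ i, 0 ≤ Sum.elim y z ⬝ᵥ M i *ᵥ Sum.elim y z) :
    (A *ᵥ y + B *ᵥ z) ⬝ᵥ P *ᵥ y + y ⬝ᵥ P *ᵥ (A *ᵥ y + B *ᵥ z) ≤ -(ε * (y ⬝ᵥ y)) := by
  rw [← sumElim_dotProduct_fromBlocks_lyapunov_mulVec_sumElim,
    ← sumElim_dotProduct_fromBlocks_neg_smul_one_mulVec_sumElim ε y z]
  exact dotProduct_mulVec_le_of_sProcedure hξ hLMI hyz

theorem lyapunov_deriv_le_neg_mul_of_dotProduct_mulVec_le_one {ν : Type*} [Fintype ν]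
    [DecidableEq ι] {E A P : Matrix ι ι ℝ} {B : Matrix ι κ ℝ}
    {M : ν → Matrix (ι ⊕ κ) (ι ⊕ κ) ℝ} {ξ : ν → ℝ} {α ε r : ℝ}
    (hα : 0 < α) (hε : 0 ≤ ε) (hr : 0 < r) (hξ : ∀ i, 0 ≤ ξ i)
    (hLMI : (-(fromBlocks (Aᵀ * P + P * A) (P * B) (Bᵀ * P) 0 + ∑ i, ξ i • M i
      - fromBlocks (-(ε • (1 : Matrix ι ι ℝ))) 0 0 0)).PosSemidef)
    (hPE : (P - (α ^ 2)⁻¹ • E).PosSemidef) (hPI : ((r ^ 2)⁻¹ • (1 : Matrix ι ι ℝ) - P).PosSemidef)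
    {y : ι → ℝ} {z : κ → ℝ}
    (hyz : y ⬝ᵥ E *ᵥ y ≤ α ^ 2 → ∀ i, 0 ≤ Sum.elim y z ⬝ᵥ M i *ᵥ Sum.elim y z)
    (hy : y ⬝ᵥ P *ᵥ y ≤ 1) :
    (A *ᵥ y + B *ᵥ z) ⬝ᵥ P *ᵥ y + y ⬝ᵥ P *ᵥ (A *ᵥ y + B *ᵥ z)
      ≤ -(ε * r ^ 2 * (y ⬝ᵥ P *ᵥ y)) := by
  have hEP := dotProduct_mulVec_le_of_posSemidef_sub hPE y
  have hPI' := dotProduct_mulVec_le_of_posSemidef_sub hPI y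
  simp only [smul_mulVec, one_mulVec, dotProduct_smul, smul_eq_mul] at hEP hPI'
  rw [inv_mul_le_iff₀ (pow_pos hα 2)] at hEP
  rw [le_inv_mul_iff₀ (pow_pos hr 2)] at hPI'
  have hS := lyapunov_deriv_le_of_posSemidef hξ hLMI (hyz (by nlinarith))
  nlinarith

end Matrix

end

theorem roa_estimate_general {n m k : ℕ}
    (E : Matrix (Fin n) (Fin n) ℝ) (hE : E.PosDef) (α : ℝ) (hα : 0 < α)
    (A : Matrix (Fin n) (Fin n) ℝ) (B : Matrix (Fin n) (Fin m) ℝ)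
    (M : Fin k → Matrix (Fin n ⊕ Fin m) (Fin n ⊕ Fin m) ℝ)
    (hQC : ∀ (i : Fin k) (y : Fin n → ℝ), y ⬝ᵥ E.mulVec y ≤ α ^ 2 →
      0 ≤ Sum.elim y (quadMonomialVec m y) ⬝ᵥ
            (M i).mulVec (Sum.elim y (quadMonomialVec m y)))
    (P : Matrix (Fin n) (Fin n) ℝ)
    (ξ : Fin k → ℝ) (hξ : ∀ i, 0 ≤ ξ i) (ε r : ℝ) (hε : 0 < ε) (hr : 0 < r)
    (hLMI : (-(fromBlocks (Aᵀ * P + P * A) (P * B) (Bᵀ * P) 0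
            + ∑ i, ξ i • M i
            - fromBlocks (-(ε • (1 : Matrix (Fin n) (Fin n) ℝ))) 0 0 0)).PosDef)
    (hPE : (P - (α ^ 2)⁻¹ • E).PosSemidef)
    (hPI : ((r ^ 2)⁻¹ • (1 : Matrix (Fin n) (Fin n) ℝ) - P).PosSemidef)
    (x : ℝ → Fin n → ℝ)
    (hode : ∀ t : ℝ, 0 ≤ t →
      HasDerivAt x (A.mulVec (x t) + B.mulVec (quadMonomialVec m (x t))) t)
    (hinit : x 0 ⬝ᵥ x 0 ≤ r ^ 2) :
    (∀ t : ℝ, 0 ≤ t → x t ⬝ᵥ P.mulVec (x t) ≤ 1) ∧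
    Filter.Tendsto x Filter.atTop (nhds 0) := by
  have hPpos : P.PosDef := by
    simpa using (hE.smul (inv_pos.2 (pow_pos hα 2))).add_posSemidef hPE
  have hV₀ : x 0 ⬝ᵥ P *ᵥ x 0 ≤ 1 := by
    have := dotProduct_mulVec_le_of_posSemidef_sub hPI (x 0)
    simp only [smul_mulVec, one_mulVec, dotProduct_smul, smul_eq_mul] at this
    rw [← inv_mul_cancel₀ (pow_pos hr 2).ne']
    exact this.trans (by gcongr)
  have hκ : 0 < ε * r ^ 2 / 2 := by positivity
  have hbound : ∀ t, 0 ≤ t → x t ⬝ᵥ P *ᵥ x t ≤ 1 * Real.exp (-(ε * r ^ 2 / 2 * t)) :=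
    fun t ht => le_mul_exp_of_hasDerivAt_le_neg_mul one_pos hκ.le (by linarith)
      (fun s hs => (hode s hs).dotProduct ((hode s hs).const_mulVec P)) hV₀
      (fun s _ hs => lyapunov_deriv_le_neg_mul_of_dotProduct_mulVec_le_one hα hε.le hr hξ
        hLMI.posSemidef hPE hPI (fun hE i => hQC i (x s) hE) hs) ht
  refine ⟨fun t ht => (hbound t ht).trans ?_, hPpos.tendsto_zero_of_tendsto_dotProduct_mulVec ?_⟩
  · simpa using mul_nonneg hκ.le ht
  · refine squeeze_zero' (Eventually.of_forall fun t => ?_)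
      ((eventually_ge_atTop 0).mono hbound) ?_
    · simpa using hPpos.posSemidef.dotProduct_mulVec_nonneg (x t)
    · simpa only [one_mul, Function.comp_def, id] using
        Real.tendsto_exp_neg_atTop_nhds_zero.comp (tendsto_id.const_mul_atTop hκ)

/-- Theorem 1 (region-of-attraction estimate): suppose the nonlinearity `z`
satisfies the quadratic constraints `M₁, …, M_k` on the ellipsoid
`{x : xᵀEx ≤ α²}`, and there exist a symmetric `P`, multipliers `ξᵢ ≥ 0`,
`ε > 0`, and `r > 0` such that
(i) `[[AᵀP+PA, PB],[BᵀP, 0]] + Σᵢ ξᵢ Mᵢ − [[−εI, 0],[0, 0]] ≺ 0` and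
(ii) `(1/α²)E ⪯ P ⪯ (1/r²)I`.  Then every differentiable trajectory of
`ẋ = Ax + Bz(x)` starting in `{x : xᵀx ≤ r²}` remains in `{x : xᵀPx ≤ 1}`
and converges to the origin. -/
theorem roa_estimate {n m k : ℕ} (hm : m = n * (n + 1) / 2)
    (E : Matrix (Fin n) (Fin n) ℝ) (hE : E.PosDef) (α : ℝ) (hα : 0 < α)
    (A : Matrix (Fin n) (Fin n) ℝ) (B : Matrix (Fin n) (Fin m) ℝ)
    (M : Fin k → Matrix (Fin n ⊕ Fin m) (Fin n ⊕ Fin m) ℝ)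
    (hMsym : ∀ i, (M i).IsHermitian)
    (hQC : ∀ (i : Fin k) (y : Fin n → ℝ), y ⬝ᵥ E.mulVec y ≤ α ^ 2 →
      0 ≤ Sum.elim y (quadMonomialVec m y) ⬝ᵥ
            (M i).mulVec (Sum.elim y (quadMonomialVec m y)))
    (P : Matrix (Fin n) (Fin n) ℝ) (hP : P.IsHermitian)
    (ξ : Fin k → ℝ) (hξ : ∀ i, 0 ≤ ξ i) (ε r : ℝ) (hε : 0 < ε) (hr : 0 < r)
    (hLMI : (-(fromBlocks (Aᵀ * P + P * A) (P * B) (Bᵀ * P) 0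
            + ∑ i, ξ i • M i
            - fromBlocks (-(ε • (1 : Matrix (Fin n) (Fin n) ℝ))) 0 0 0)).PosDef)
    (hPE : (P - (α ^ 2)⁻¹ • E).PosSemidef)
    (hPI : ((r ^ 2)⁻¹ • (1 : Matrix (Fin n) (Fin n) ℝ) - P).PosSemidef)
    (x : ℝ → Fin n → ℝ)
    (hode : ∀ t : ℝ, 0 ≤ t →
      HasDerivAt x (A.mulVec (x t) + B.mulVec (quadMonomialVec m (x t))) t)
    (hinit : x 0 ⬝ᵥ x 0 ≤ r ^ 2) :
    (∀ t : ℝ, 0 ≤ t → x t ⬝ᵥ P.mulVec (x t) ≤ 1) ∧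
    Filter.Tendsto x Filter.atTop (nhds 0) :=
  roa_estimate_general E hE α hα A B M hQC P ξ hξ ε r hε hr hLMI hPE hPI x hode hinit
end
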